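/- Let G be a finite subgroup of GLₙ(Z) acting on Zⁿ and hence on A = C[σ₁,σ₁⁻¹,...,σₙ,σₙ⁻¹] by permuting monomials, and let P ⊆ A^k be a G-invariant submodule. Then every solution f ∈ Ker_F(P) is G-invariant if and only if for every k-tuple of monomials (σ^{x¹},...,σ^{x^k}) and every g ∈ G, the element (σ^{x¹} − g·σ^{x¹}, ..., σ^{x^k} − g·σ^{x^k}) belongs to P. -/

import Mathlib

noncomputable section

/-- `A n` is the Laurent polynomial ring `ℂ[σ₁,σ₁⁻¹,…,σₙ,σₙ⁻¹]`. -/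
abbrev A (n : ℕ) : Type := AddMonoidAlgebra ℂ (Fin n → ℤ)

/-- `F n` is the space of all complex valued functions on the lattice `ℤⁿ`. -/
abbrev F (n : ℕ) : Type := (Fin n → ℤ) → ℂ

/-- The shift `σ^y` acts on functions by translation: `(σ^y f)(x) = f (x + y)`. -/
def shiftHom (n : ℕ) : Multiplicative (Fin n → ℤ) →* Module.End ℂ (F n) where
  toFun y :=
    { toFun := fun f x => f (x + y.toAdd)
      map_add' := fun _ _ => rfl
      map_smul' := fun _ _ => rfl }
  map_one' := by ext f x; simp
  map_mul' y w := by
    ext f x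
    simp [Module.End.mul_apply, add_assoc]

/-- The `A`-module structure on `F` by shifts. -/
instance moduleAF (n : ℕ) : Module (A n) (F n) :=
  Module.compHom (F n)
    ((AddMonoidAlgebra.lift ℂ (Module.End ℂ (F n)) (Fin n → ℤ) (shiftHom n)).toRingHom)

lemma smul_def' {n : ℕ} (a : A n) (f : F n) (x : Fin n → ℤ) :
    (a • f) x = a.coeff.sum fun y c => c * f (x + y) := by
  show (AddMonoidAlgebra.lift ℂ (Module.End ℂ (F n)) (Fin n → ℤ) (shiftHom n)) a f x = _
  rw [AddMonoidAlgebra.lift_apply]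
  simp [Finsupp.sum, shiftHom, smul_eq_mul]

/-- The extension of `f : ℤⁿ → ℂ` to a linear functional on `A`. -/
def fext {n : ℕ} (f : F n) (a : A n) : ℂ := a.coeff.sum fun y c => c * f y

/-- The monoid hom sending `σ^y` to `σ^{My}` for a matrix `M ∈ GLₙ(ℤ)`. -/
def glHom {n : ℕ} (M : Matrix (Fin n) (Fin n) ℤ) : Multiplicative (Fin n → ℤ) →* A n where
  toFun y := AddMonoidAlgebra.single (M.mulVec y.toAdd) 1
  map_one' := by simp [AddMonoidAlgebra.one_def]
  map_mul' y w := by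
    simp [AddMonoidAlgebra.single_mul_single, Matrix.mulVec_add]

/-- The algebra endomorphism of the Laurent ring induced by `g ∈ GLₙ(ℤ)`,
acting on monomials by `g · σ^x = σ^{gx}`. -/
def actGL {n : ℕ} (g : Matrix.GeneralLinearGroup (Fin n) ℤ) : A n →ₐ[ℂ] A n :=
  AddMonoidAlgebra.lift ℂ (A n) (Fin n → ℤ) (glHom (g : Matrix (Fin n) (Fin n) ℤ))

/-!
A tuple `f ∈ Fᵏ` defines the linear functional `q ↦ ∑ⱼ fext (f j) (q j)` on `Aᵏ`, and every
`ℂ`-linear functional on `Aᵏ` arises this way. Because `(a • f) z = fext f (σ^z a)` and `P` is an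
`A`-submodule, `f` is a solution of `P` exactly when its functional vanishes on `P`. The
functional of `f` sends `(σ^{xʲ} − g·σ^{xʲ})ⱼ` to `∑ⱼ (f j (xʲ) − f j (g xʲ))`, so all solutions
are `G`-invariant iff every functional vanishing on `P` kills these differences, i.e. iff they
lie in `P`, since over a field a subspace is cut out by the functionals vanishing on it.
-/

open AddMonoidAlgebra Matrix

section

variable {n k : ℕ}

lemma actGL_single (g : Matrix.GeneralLinearGroup (Fin n) ℤ) (y : Fin n → ℤ) (c : ℂ) :
    actGL g (single y c) = single ((g : Matrix (Fin n) (Fin n) ℤ) *ᵥ y) c := by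
  simp [actGL, glHom]

lemma fext_single (f : F n) (y : Fin n → ℤ) (c : ℂ) : fext f (single y c) = c * f y := by
  simp [fext]

lemma single_smul_apply (y : Fin n → ℤ) (c : ℂ) (f : F n) (x : Fin n → ℤ) :
    (single y c • f) x = c * f (x + y) := by
  simp [smul_def']

def fextₗ (f : F n) : A n →ₗ[ℂ] ℂ :=
  Finsupp.linearCombination ℂ f ∘ₗ (coeffLinearEquiv ℂ).toLinearMap

lemma fextₗ_apply (f : F n) (a : A n) : fextₗ f a = fext f a := rfl

def fextPi (f : Fin k → F n) : (Fin k → A n) →ₗ[ℂ] ℂ :=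
  ∑ j, (fextₗ (f j)).comp (LinearMap.proj j)

lemma fextPi_apply (f : Fin k → F n) (q : Fin k → A n) :
    fextPi f q = ∑ j, fext (f j) (q j) := by
  simp [fextPi, fextₗ_apply]

lemma smul_apply_eq_fext (a : A n) (f : F n) (z : Fin n → ℤ) :
    (a • f) z = fext f (single z 1 * a) := by
  induction a using AddMonoidAlgebra.induction_linear with
  | zero => simp [fext]
  | add a b ha hb => simp [add_smul, ha, hb, mul_add, ← fextₗ_apply]
  | single y c => rw [single_smul_apply, single_mul_single, one_mul, fext_single]

lemma sum_smul_apply (p : Fin k → A n) (f : Fin k → F n) (z : Fin n → ℤ) :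
    (∑ j, p j • f j) z = fextPi f ((single z 1 : A n) • p) := by
  simp [Finset.sum_apply, smul_apply_eq_fext, fextPi_apply]

lemma forall_sum_smul_eq_zero_iff (P : Submodule (A n) (Fin k → A n)) (f : Fin k → F n) :
    (∀ p ∈ P, ∑ j, p j • f j = 0) ↔ ∀ p ∈ P, fextPi f p = 0 := by
  refine ⟨fun h p hp => ?_, fun h p hp => funext fun z => ?_⟩
  · have := congrFun (h p hp) 0
    rwa [sum_smul_apply, ← one_def, one_smul] at this
  · rw [sum_smul_apply]
    exact h _ (P.smul_mem _ hp)

lemma fextPi_piSingle (f : Fin k → F n) (j : Fin k) (a : A n) :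
    fextPi f (Pi.single j a) = fext (f j) a := by
  simp [fextPi, Pi.single_apply, apply_ite (fextₗ _)]
  exact fextₗ_apply _ _

lemma exists_fextPi_eq (ψ : (Fin k → A n) →ₗ[ℂ] ℂ) : ∃ f : Fin k → F n, fextPi f = ψ := by
  refine ⟨fun j y => ψ (Pi.single j (single y 1)), LinearMap.pi_ext' fun j => ?_⟩
  ext y
  simp [fextPi_piSingle, fext_single]

lemma fext_actGL_eq_iff (f : F n) (g : Matrix.GeneralLinearGroup (Fin n) ℤ) :
    (∀ a, fext f (actGL g a) = fext f a) ↔ ∀ y, f ((g : Matrix (Fin n) (Fin n) ℤ) *ᵥ y) = f y := by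
  refine ⟨fun h y => by simpa [actGL_single, fext_single] using h (single y 1), fun h => ?_⟩
  suffices (fextₗ f).comp (actGL g).toLinearMap = fextₗ f from fun a => congr($this a)
  ext y
  simp [fextₗ_apply, actGL_single, fext_single, h]

lemma fextPi_monomial_sub_actGL (f : Fin k → F n) (g : Matrix.GeneralLinearGroup (Fin n) ℤ)
    (x : Fin k → Fin n → ℤ) :
    fextPi f (fun j => single (x j) 1 - actGL g (single (x j) 1)) =
      ∑ j, (f j (x j) - f j ((g : Matrix (Fin n) (Fin n) ℤ) *ᵥ x j)) := by
  simp only [fextPi_apply, actGL_single, ← fextₗ_apply, map_sub]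
  simp [fextₗ_apply, fext_single]

end

theorem all_solutions_symmetric_iff_general (n k : ℕ)
    (G : Subgroup (Matrix.GeneralLinearGroup (Fin n) ℤ))
    (P : Submodule (A n) (Fin k → A n)) :
    (∀ f : Fin k → F n, (∀ p ∈ P, (∑ j, p j • f j) = 0) →
        ∀ g ∈ G, ∀ (j : Fin k) (a : A n), fext (f j) (actGL g a) = fext (f j) a) ↔
      (∀ (x : Fin k → (Fin n → ℤ)), ∀ g ∈ G,
        (fun j => AddMonoidAlgebra.single (x j) (1 : ℂ)
          - actGL g (AddMonoidAlgebra.single (x j) 1)) ∈ P) := by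
  simp_rw [forall_sum_smul_eq_zero_iff, fext_actGL_eq_iff]
  constructor
  · intro hsol x g hg
    by_contra hx
    obtain ⟨ψ, hψx, hψP⟩ :=
      Submodule.exists_dual_map_eq_bot_of_notMem (p := P.restrictScalars ℂ) hx inferInstance
    obtain ⟨f, rfl⟩ := exists_fextPi_eq ψ
    have hf := hsol f (fun p hp => LinearMap.le_ker_iff_map.2 hψP hp) g hg
    simp [fextPi_monomial_sub_actGL, hf] at hψx
  · intro hP f hf g hg j y
    have := hf _ (hP (Pi.single j y) g hg)
    rw [fextPi_monomial_sub_actGL, Fintype.sum_eq_single j (fun i hi => by simp [hi])] at this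
    simpa [sub_eq_zero, eq_comm] using this

/-- For a finite subgroup `G ⊆ GLₙ(ℤ)` acting on `A` by permuting monomials and a
`G`-invariant submodule `P ⊆ A^k`: every solution of `P` is `G`-invariant if and
only if `(σ^{x¹} − g·σ^{x¹}, …, σ^{x^k} − g·σ^{x^k}) ∈ P` for every tuple of
monomials and every `g ∈ G`. -/
theorem all_solutions_symmetric_iff (n k : ℕ)
    (G : Subgroup (Matrix.GeneralLinearGroup (Fin n) ℤ)) [Finite G]
    (P : Submodule (A n) (Fin k → A n))
    (hinv : ∀ g ∈ G, ∀ p ∈ P, (fun j => actGL g (p j)) ∈ P) :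
    (∀ f : Fin k → F n, (∀ p ∈ P, (∑ j, p j • f j) = 0) →
        ∀ g ∈ G, ∀ (j : Fin k) (a : A n), fext (f j) (actGL g a) = fext (f j) a) ↔
      (∀ (x : Fin k → (Fin n → ℤ)), ∀ g ∈ G,
        (fun j => AddMonoidAlgebra.single (x j) (1 : ℂ)
          - actGL g (AddMonoidAlgebra.single (x j) 1)) ∈ P) :=
  all_solutions_symmetric_iff_general n k G P
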